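/- Let b be a ρ-cocycle for an isometric linear representation ρ of a group G on a uniformly convex Banach space B. Then b is a coboundary (i.e., there exists ξ ∈ B with b(g) = ξ − ρ(g)ξ for all g) if and only if b has bounded range. -/

import Mathlib

/-!
The maps `x ↦ ρ g x + b g` are affine isometries of `B` that permute the bounded set `b(G)`,
because `ρ g (b h) + b g = b (g * h)`. In a uniformly convex Banach space a bounded set has a
unique Chebyshev centre, the point minimising the distance to the farthest point of the set:
the midpoint of two near-minimisers that are far apart would beat the minimum, so minimising
sequences are Cauchy. The centre is thus fixed by every `x ↦ ρ g x + b g`, i.e.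
`b g = ξ - ρ g ξ`.
-/

open Bornology Metric Set Filter Topology

section UniformConvex

variable {E : Type*} [SeminormedAddCommGroup E] [NormedSpace ℝ E] [UniformConvexSpace E]

/-- Unlike in `exists_forall_closed_ball_dist_add_le_two_mul_sub`, `δ` is uniform in the radius
`s ≤ R`: rescale the ball to radius `R`, and note that `ε ≤ ‖x - y‖` forces `ε ≤ 2 * s`. -/
theorem exists_forall_closed_ball_dist_add_le_two_mul_sub_of_le {ε R : ℝ} (hε : 0 < ε)
    (hR : 0 < R) :
    ∃ δ, 0 < δ ∧ ∀ ⦃s⦄, s ≤ R → ∀ ⦃x : E⦄, ‖x‖ ≤ s → ∀ ⦃y⦄, ‖y‖ ≤ s → ε ≤ ‖x - y‖ →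
      ‖x + y‖ ≤ 2 * s - δ := by
  obtain ⟨δ, hδ, h⟩ := exists_forall_closed_ball_dist_add_le_two_mul_sub E hε R
  refine ⟨δ * ε / (2 * R), by positivity, fun s hsR x hx y hy hxy => ?_⟩
  have hεs : ε ≤ 2 * s := by linarith [norm_sub_le x y]
  have hs : 0 < s := by linarith
  set c := R / s
  have hc : 1 ≤ c := (one_le_div hs).2 hsR
  have hcs : c * s = R := div_mul_cancel₀ R hs.ne'
  have hnorm (z : E) : ‖c • z‖ = c * ‖z‖ := norm_smul_of_nonneg (by positivity) z
  have hsum := h (x := c • x) (y := c • y) (by rw [hnorm, ← hcs]; gcongr)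
    (by rw [hnorm, ← hcs]; gcongr)
    (by rw [← smul_sub, hnorm]; exact hxy.trans (le_mul_of_one_le_left (norm_nonneg _) hc))
  rw [← smul_add, hnorm] at hsum
  have hRsum : R * ‖x + y‖ ≤ R * (2 * s) - δ * s := by
    calc R * ‖x + y‖ = s * (c * ‖x + y‖) := by rw [← hcs]; ring
      _ ≤ s * (2 * R - δ) := by gcongr
      _ = R * (2 * s) - δ * s := by ring
  rw [le_sub_iff_add_le, ← le_sub_iff_add_le', div_le_iff₀ (by positivity)]
  nlinarith [mul_le_mul_of_nonneg_left hεs hδ.le]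

end UniformConvex

section Chebyshev

variable {ι α : Type*} [PseudoMetricSpace α]

/-- This is the junk value `0` when the range of `f` is unbounded. -/
noncomputable def chebyshevRadiusAt (f : ι → α) (x : α) : ℝ := ⨆ i, dist (f i) x

noncomputable def chebyshevRadius (f : ι → α) : ℝ := ⨅ x, chebyshevRadiusAt f x

variable {f : ι → α}

theorem chebyshevRadiusAt_nonneg (x : α) : 0 ≤ chebyshevRadiusAt f x :=
  Real.iSup_nonneg fun _ => dist_nonneg

theorem dist_le_chebyshevRadiusAt (hf : IsBounded (range f)) (i : ι) (x : α) :
    dist (f i) x ≤ chebyshevRadiusAt f x := by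
  obtain ⟨r, hr⟩ := (isBounded_iff_subset_closedBall x).1 hf
  exact le_ciSup ⟨r, forall_mem_range.2 fun j => hr (mem_range_self j)⟩ i

theorem chebyshevRadiusAt_le [Nonempty ι] {x : α} {c : ℝ} (h : ∀ i, dist (f i) x ≤ c) :
    chebyshevRadiusAt f x ≤ c :=
  ciSup_le h

theorem chebyshevRadius_nonneg : 0 ≤ chebyshevRadius f :=
  Real.iInf_nonneg chebyshevRadiusAt_nonneg

theorem chebyshevRadius_le (x : α) : chebyshevRadius f ≤ chebyshevRadiusAt f x :=
  ciInf_le ⟨0, forall_mem_range.2 chebyshevRadiusAt_nonneg⟩ x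

theorem lipschitzWith_chebyshevRadiusAt (hf : IsBounded (range f)) :
    LipschitzWith 1 (chebyshevRadiusAt f) :=
  LipschitzWith.of_le_add fun x y =>
    Real.iSup_le (fun i => (dist_triangle _ y _).trans <|
        add_le_add (dist_le_chebyshevRadiusAt hf i y) (dist_comm y x).le)
      (add_nonneg (chebyshevRadiusAt_nonneg y) dist_nonneg)

theorem chebyshevRadiusAt_apply_of_isometry {T : α → α} (hT : Isometry T) (σ : ι ≃ ι)
    (hσ : ∀ i, f (σ i) = T (f i)) (x : α) :
    chebyshevRadiusAt f (T x) = chebyshevRadiusAt f x := by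
  simp only [chebyshevRadiusAt, ← σ.iSup_comp (g := fun i => dist (f i) (T x)), hσ, hT.dist_eq]

end Chebyshev

section ChebyshevCenter

variable {ι E : Type*} [Nonempty ι] [NormedAddCommGroup E] [NormedSpace ℝ E]
  [UniformConvexSpace E] {f : ι → E}

theorem exists_forall_chebyshevRadiusAt_le_add_dist_lt (hf : IsBounded (range f)) {ε : ℝ}
    (hε : 0 < ε) :
    ∃ η > 0, ∀ u v : E, chebyshevRadiusAt f u ≤ chebyshevRadius f + η →
      chebyshevRadiusAt f v ≤ chebyshevRadius f + η → dist u v < ε := by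
  set R := chebyshevRadius f
  obtain ⟨δ, hδ, huc⟩ := exists_forall_closed_ball_dist_add_le_two_mul_sub_of_le (E := E) hε
    (show 0 < R + 1 by linarith [chebyshevRadius_nonneg (f := f)])
  obtain ⟨η, hη, hη1, hηδ⟩ : ∃ η : ℝ, 0 < η ∧ η ≤ 1 ∧ η ≤ δ / 4 :=
    ⟨min 1 (δ / 4), by positivity, min_le_left _ _, min_le_right _ _⟩
  refine ⟨η, hη, fun u v hu hv => ?_⟩
  by_contra! huv
  set m : E := (2 : ℝ)⁻¹ • (u + v)
  have hm : ∀ i, dist (f i) m ≤ R + η - δ / 2 := by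
    intro i
    have hsum := huc (by linarith)
      ((dist_eq_norm _ _).symm.trans_le ((dist_le_chebyshevRadiusAt hf i u).trans hu))
      ((dist_eq_norm _ _).symm.trans_le ((dist_le_chebyshevRadiusAt hf i v).trans hv))
      (by rwa [sub_sub_sub_cancel_left, ← dist_eq_norm, dist_comm])
    have hhalf : f i - m = (2 : ℝ)⁻¹ • ((f i - u) + (f i - v)) := by module
    rw [dist_eq_norm, hhalf, norm_smul_of_nonneg (by norm_num)]
    linarith
  linarith [chebyshevRadius_le (f := f) m, chebyshevRadiusAt_le hm]

theorem eq_of_chebyshevRadiusAt_eq (hf : IsBounded (range f)) {u v : E}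
    (hu : chebyshevRadiusAt f u = chebyshevRadius f)
    (hv : chebyshevRadiusAt f v = chebyshevRadius f) : u = v :=
  eq_of_forall_dist_le fun ε hε => by
    obtain ⟨η, hη, h⟩ := exists_forall_chebyshevRadiusAt_le_add_dist_lt hf hε
    exact (h u v (by linarith) (by linarith)).le

theorem exists_chebyshevRadiusAt_eq [CompleteSpace E] (hf : IsBounded (range f)) :
    ∃ x, chebyshevRadiusAt f x = chebyshevRadius f := by
  have hmin : ∀ n : ℕ, ∃ x, chebyshevRadiusAt f x < chebyshevRadius f + 1 / (n + 1) :=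
    fun n => exists_lt_of_ciInf_lt (lt_add_of_pos_right _ Nat.one_div_pos_of_nat)
  choose x hx using hmin
  have hcauchy : CauchySeq x := by
    refine Metric.cauchySeq_iff'.2 fun ε hε => ?_
    obtain ⟨η, hη, h⟩ := exists_forall_chebyshevRadiusAt_le_add_dist_lt hf hε
    obtain ⟨N, hN⟩ := exists_nat_one_div_lt hη
    have hle : ∀ n ≥ N, chebyshevRadiusAt f (x n) ≤ chebyshevRadius f + η := fun n hn => by
      linarith [hx n, Nat.one_div_le_one_div (α := ℝ) hn]
    exact ⟨N, fun n hn => h _ _ (hle n hn) (hle N le_rfl)⟩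
  obtain ⟨ξ, hξ⟩ := cauchySeq_tendsto_of_complete hcauchy
  refine ⟨ξ, le_antisymm ?_ (chebyshevRadius_le ξ)⟩
  have hbound : Tendsto (fun n : ℕ => chebyshevRadius f + 1 / (n + 1)) atTop
      (𝓝 (chebyshevRadius f)) := by
    simpa using (tendsto_const_nhds (x := chebyshevRadius f)).add
      tendsto_one_div_add_atTop_nhds_zero_nat
  exact le_of_tendsto_of_tendsto' ((lipschitzWith_chebyshevRadiusAt hf).continuous.tendsto ξ
    |>.comp hξ) hbound fun n => (hx n).le

end ChebyshevCenter

/-- Let `ρ` be an isometric linear representation of a group `G` on a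
uniformly convex Banach space `B` and `b` a `ρ`-cocycle. Then `b` is a coboundary
(there is `ξ ∈ B` with `b g = ξ - ρ g ξ` for all `g`) iff `b` has bounded range. -/
theorem cocycle_coboundary_iff_bounded
    (G : Type) [Group G]
    (B : Type) [NormedAddCommGroup B] [NormedSpace ℝ B] [UniformConvexSpace B]
    [CompleteSpace B]
    (ρ : G →* (B ≃ₗᵢ[ℝ] B)) (b : G → B)
    (hb : ∀ g h : G, b (g * h) = b g + ρ g (b h)) :
    (∃ ξ : B, ∀ g : G, b g = ξ - ρ g ξ) ↔ Bornology.IsBounded (Set.range b) := by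
  constructor
  · rintro ⟨ξ, hξ⟩
    refine isBounded_iff_forall_norm_le.2 ⟨2 * ‖ξ‖, forall_mem_range.2 fun g => ?_⟩
    rw [hξ g]
    exact (norm_sub_le _ _).trans_eq (by rw [(ρ g).norm_map, two_mul])
  · intro hbdd
    obtain ⟨ξ, hξ⟩ := exists_chebyshevRadiusAt_eq hbdd
    refine ⟨ξ, fun g => ?_⟩
    have hT : Isometry fun x => ρ g x + b g := (isometry_add_right (b g)).comp (ρ g).isometry
    have hperm : ∀ h, b (Equiv.mulLeft g h) = ρ g (b h) + b g := fun h => by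
      rw [Equiv.coe_mulLeft, hb, add_comm]
    have hfix : ρ g ξ + b g = ξ := eq_of_chebyshevRadiusAt_eq hbdd
      ((chebyshevRadiusAt_apply_of_isometry hT _ hperm ξ).trans hξ) hξ
    exact eq_sub_of_add_eq' hfix
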